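/- arXiv:1410.0227 — 2 statements merged into one kernel-verified Lean document; each statement's English description precedes it below -/
import Mathlib

section
/- Let 1 ≤ p < q < ∞, let G be a topological group, and let π^p : G → O(ℓ_p) be a (BL) orthogonal representation without nonzero invariant vectors, with Mazur-conjugate representation π^q on ℓ_q. If H^1(G,π^q) = 0 and H^1(G,|π^p|) = 0, then H^1(G,π^p) = 0. -/
open MeasureTheory ENNReal Filter Set

noncomputable section

/-- A strongly continuous representation of a topological group `G` by bijective
`ℂ`-linear isometries of a complex normed module `E` (the group `O(E)` of the paper). -/
structure IsomRep (G : Type*) [Group G] [TopologicalSpace G]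
    (E : Type*) [AddCommGroup E] [SMul ℂ E] [Norm E] where
  ρ : G → E → E
  map_add : ∀ (g : G) (x y : E), ρ g (x + y) = ρ g x + ρ g y
  map_smul : ∀ (g : G) (c : ℂ) (x : E), ρ g (c • x) = c • ρ g x
  norm_map : ∀ (g : G) (x : E), ‖ρ g x‖ = ‖x‖
  bijective : ∀ g : G, Function.Bijective (ρ g)
  map_mul' : ∀ (g h : G) (x : E), ρ (g * h) x = ρ g (ρ h x)
  map_one' : ∀ x : E, ρ 1 x = x
  strong_cont : ∀ (x : E) (g₀ : G) (ε : ℝ), 0 < ε →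
    ∀ᶠ g in nhds g₀, ‖ρ g x - ρ g₀ x‖ < ε

variable {G : Type*} [Group G] [TopologicalSpace G]
variable {E : Type*} [AddCommGroup E] [SMul ℂ E] [Norm E]

/-- Continuity of a map into a normed module, expressed via the norm. -/
def NormContinuous (b : G → E) : Prop :=
  ∀ (g₀ : G) (ε : ℝ), 0 < ε → ∀ᶠ g in nhds g₀, ‖b g - b g₀‖ < ε

/-- A continuous `1`-cocycle for the representation `π`. -/
def IsCocycle (π : IsomRep G E) (b : G → E) : Prop :=
  NormContinuous b ∧ ∀ g h : G, b (g * h) = b g + π.ρ g (b h)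

/-- A `1`-coboundary. -/
def IsCoboundary (π : IsomRep G E) (b : G → E) : Prop :=
  ∃ f : E, ∀ g : G, b g = f - π.ρ g f

/-- `H¹(G,π) = 0` : every continuous cocycle is a coboundary, equivalently every affine
isometric action with linear part `π` has a fixed point. -/
def H1Trivial (π : IsomRep G E) : Prop :=
  ∀ b : G → E, IsCocycle π b → IsCoboundary π b

/-- The set of `π(G)`-invariant vectors. -/
def InvariantVectors (π : IsomRep G E) : Set E := {x | ∀ g : G, π.ρ g x = x}

/-- The quotient (semi)norm of `x` modulo a subset `S` : the distance from `x` to `S`. -/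
def quotNorm (S : Set E) (x : E) : ℝ := ⨅ w : S, ‖x - (w : E)‖

/-- `π` admits a sequence of almost invariant unit vectors lying in the subset `S`. -/
def HasAIVin (π : IsomRep G E) (S : Set E) : Prop :=
  ∃ v : ℕ → E, (∀ n, v n ∈ S ∧ ‖v n‖ = 1) ∧
    ∀ Q : Set G, IsCompact Q → ∀ ε : ℝ, 0 < ε →
      ∃ N : ℕ, ∀ n ≥ N, ∀ g ∈ Q, ‖π.ρ g (v n) - v n‖ < ε

/-- The quotient representation of `π` on `E / E^{π(G)}` admits a sequence of almost
invariant unit vectors (expressed upstairs via the quotient norm). -/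
def HasAIVquot (π : IsomRep G E) : Prop :=
  ∃ v : ℕ → E, (∀ n, quotNorm (InvariantVectors π) (v n) = 1) ∧
    ∀ Q : Set G, IsCompact Q → ∀ ε : ℝ, 0 < ε →
      ∃ N : ℕ, ∀ n ≥ N, ∀ g ∈ Q, quotNorm (InvariantVectors π) (π.ρ g (v n) - v n) < ε

/-- Kazhdan's property (T) : every unitary representation of `G` (on a complex Hilbert space)
with almost invariant vectors has a nonzero invariant vector. -/
def HasKazhdanT (G : Type*) [Group G] [TopologicalSpace G] : Prop :=
  ∀ (H : Type) [NormedAddCommGroup H] [InnerProductSpace ℂ H] [CompleteSpace H],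
    ∀ π : IsomRep G H,
      (∀ Q : Set G, IsCompact Q → ∀ ε : ℝ, 0 < ε →
        ∃ v : H, ‖v‖ = 1 ∧ ∀ g ∈ Q, ‖π.ρ g v - v‖ < ε) →
      ∃ v : H, v ≠ 0 ∧ ∀ g : G, π.ρ g v = v

/-! ### Sequence spaces `ℓ_p` -/

/-- `ℓ_p(X)`, the space of `p`-summable complex families over `X`. -/
abbrev lpSeq (X : Type*) (p : ℝ) := lp (fun _ : X => ℂ) (ENNReal.ofReal p)

/-- Property `(F_{ℓ_p})` : every affine isometric action of `G` on `ℓ_p` has a fixed point. -/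
def HasFlp (G : Type*) [Group G] [TopologicalSpace G] (p : ℝ) : Prop :=
  ∀ π : IsomRep G (lpSeq ℕ p), H1Trivial π

/-- The fixed-point spectrum `𝓕_{ℓ^∞}(G)` of `G` for actions on the spaces `ℓ_p`. -/
def lpSpectrum (G : Type*) [Group G] [TopologicalSpace G] : Set ℝ :=
  {p : ℝ | 1 ≤ p ∧ HasFlp G p}

/-! ### `L_p(X,μ)` spaces and (BL) representations -/

variable {X : Type*} [MeasurableSpace X]

/-- `L_p(X,μ)` with a real exponent `p`. -/
abbrev LpSp (μ : Measure X) (p : ℝ) := Lp ℂ (ENNReal.ofReal p) μ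

/-- `U` is an isometry of Banach–Lamperti form with data `(h, φ)` :
`U f (x) = h x · (d(φ_*μ)/dμ (x))^{1/p} · f (φ x)`, with `|h| = 1` a.e. and `φ` a
measure-class-preserving bijection of `X`. -/
def IsBLIsometry (μ : Measure X) (p : ℝ) (U : LpSp μ p → LpSp μ p)
    (h : X → ℂ) (φ : X → X) : Prop :=
  Function.Bijective φ ∧ Measurable φ ∧
  μ.map φ ≪ μ ∧ μ ≪ μ.map φ ∧
  (∀ᵐ x ∂μ, ‖h x‖ = 1) ∧
  ∀ f : LpSp μ p, (U f : X → ℂ) =ᵐ[μ]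
    fun x => h x * ((((μ.map φ).rnDeriv μ x).toReal ^ (1 / p) : ℝ) : ℂ) * (f : X → ℂ) (φ x)

/-- `U` is a measure-preserving isometry of Banach–Lamperti form with data `(h, φ)` :
`U f (x) = h x · f (φ x)` with `|h| = 1` a.e. and `φ` a measure-preserving bijection. -/
def IsBLmpIsometry (μ : Measure X) (p : ℝ) (U : LpSp μ p → LpSp μ p)
    (h : X → ℂ) (φ : X → X) : Prop :=
  Function.Bijective φ ∧ MeasurePreserving φ μ μ ∧
  (∀ᵐ x ∂μ, ‖h x‖ = 1) ∧
  ∀ f : LpSp μ p, (U f : X → ℂ) =ᵐ[μ] fun x => h x * (f : X → ℂ) (φ x)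

/-- A (BL) orthogonal representation of `G` together with all its Mazur conjugates :
for every `q ∈ [1,∞)` a strongly continuous isometric representation on `L_q(X,μ)`,
all given by the Banach–Lamperti formula with the *same* data `(h_g, φ_g)` (this is
exactly the family `(π^q)_q` of conjugates of a (BL) representation by the Mazur maps). -/
structure BLFamily (G : Type*) [Group G] [TopologicalSpace G]
    {X : Type*} [MeasurableSpace X] (μ : Measure X) where
  h : G → X → ℂ
  φ : G → X → X
  rep : (q : ℝ) → 1 ≤ q → IsomRep G (LpSp μ q)
  isBL : ∀ (q : ℝ) (hq : 1 ≤ q) (g : G), IsBLIsometry μ q ((rep q hq).ρ g) (h g) (φ g)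

/-- A measure-preserving (BL) orthogonal representation together with all its Mazur
conjugates, as in `BLFamily`. -/
structure BLmpFamily (G : Type*) [Group G] [TopologicalSpace G]
    {X : Type*} [MeasurableSpace X] (μ : Measure X) where
  h : G → X → ℂ
  φ : G → X → X
  rep : (q : ℝ) → 1 ≤ q → IsomRep G (LpSp μ q)
  isBL : ∀ (q : ℝ) (hq : 1 ≤ q) (g : G), IsBLmpIsometry μ q ((rep q hq).ρ g) (h g) (φ g)

/-- The fixed-point spectrum `𝓕_{L^∞(X,μ)}(G,π)` of a (BL) representation and its
Mazur conjugates. -/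
def BLFamily.spectrum {G : Type*} [Group G] [TopologicalSpace G]
    {X : Type*} [MeasurableSpace X] {μ : Measure X} (F : BLFamily G μ) : Set ℝ :=
  {q : ℝ | ∃ hq : 1 ≤ q, H1Trivial (F.rep q hq)}

/-- The fixed-point spectrum for a measure-preserving family. -/
def BLmpFamily.spectrum {G : Type*} [Group G] [TopologicalSpace G]
    {X : Type*} [MeasurableSpace X] {μ : Measure X} (F : BLmpFamily G μ) : Set ℝ :=
  {q : ℝ | ∃ hq : 1 ≤ q, H1Trivial (F.rep q hq)}

/-- Ergodicity of the underlying action `(φ_g)_{g ∈ G}` on `(X,μ)` : every measurable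
a.e.-invariant set is null or conull. -/
def ErgodicFamily {G : Type*} {X : Type*} [MeasurableSpace X] (μ : Measure X)
    (φ : G → X → X) : Prop :=
  ∀ A : Set X, MeasurableSet A → (∀ g : G, μ (symmDiff (φ g ⁻¹' A) A) = 0) →
    μ A = 0 ∨ μ Aᶜ = 0

/-- `w ∈ L_{q'}(X,μ)` (where `q'` is the conjugate exponent of `q`) is an invariant vector
of the contragredient representation `π^*`, expressed through the duality pairing. -/
def IsDualInvariant (μ : Measure X) (q : ℝ) (π : IsomRep G (LpSp μ q)) (w : X → ℂ) : Prop :=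
  MemLp w (ENNReal.ofReal (q / (q - 1))) μ ∧
  ∀ (g : G) (f : LpSp μ q),
    ∫ x, (π.ρ g f : X → ℂ) x * w x ∂μ = ∫ x, (f : X → ℂ) x * w x ∂μ

/-- The complement `L_q(X,μ)'(π)` : the annihilator of the invariant vectors of the
contragredient representation. -/
def LpComplement (μ : Measure X) (q : ℝ) (π : IsomRep G (LpSp μ q)) : Set (LpSp μ q) :=
  {f | ∀ w : X → ℂ, IsDualInvariant μ q π w → ∫ x, (f : X → ℂ) x * w x ∂μ = 0}

/-- The Mazur map `M_{p,q} : f = sgn(f)|f| ↦ sgn(f)|f|^{p/q}`, at the level of functions. -/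
def mazurFn (p q : ℝ) (f : X → ℂ) : X → ℂ :=
  fun x => f x * (((‖f x‖ : ℝ) : ℂ) ^ ((p / q - 1 : ℝ) : ℂ))

/-! ### `L_q(0,1)` -/

/-- Lebesgue measure on `[0,1]`. -/
abbrev mu01 : Measure ℝ := volume.restrict (Set.Icc (0 : ℝ) 1)

/-- `L_q(0,1) = L_q([0,1],λ)`. -/
abbrev Lp01 (q : ℝ) := LpSp mu01 q

/-- Property `(F_{L_q(0,1)})`. -/
def HasFLp01 (G : Type*) [Group G] [TopologicalSpace G] (q : ℝ) : Prop :=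
  ∀ π : IsomRep G (Lp01 q), H1Trivial π

/-- The fixed-point spectrum `𝓕_{L^∞(0,1)}(G)`. -/
def L01Spectrum (G : Type*) [Group G] [TopologicalSpace G] : Set ℝ :=
  {q : ℝ | 1 ≤ q ∧ HasFLp01 G q}

/-- The diameter of a subset of a normed module. -/
def normDiam (S : Set E) : ℝ := sSup {r : ℝ | ∃ x ∈ S, ∃ y ∈ S, ‖x - y‖ = r}

/-! ### extra defs -/
section Extra

variable {G : Type*} [Group G] [TopologicalSpace G]

/-- `w ∈ ℓ_{p'}(X)` is an invariant vector of the contragredient representation `π^*`,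
expressed through the duality pairing `⟨f,w⟩ = ∑ f x · w x`. -/
def lpDualInvariant (p : ℝ) {X : Type*} (π : IsomRep G (lpSeq X p)) (w : X → ℂ) : Prop :=
  Memℓp w (ENNReal.ofReal (p / (p - 1))) ∧
  ∀ (g : G) (f : lpSeq X p),
    ∑' x, (π.ρ g f : ∀ _ : X, ℂ) x * w x = ∑' x, (f : ∀ _ : X, ℂ) x * w x

/-- The complement `ℓ_p'(π)`, the annihilator of the invariant vectors of the
contragredient representation. -/
def lpComplement (p : ℝ) {X : Type*} (π : IsomRep G (lpSeq X p)) : Set (lpSeq X p) :=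
  {f | ∀ w : X → ℂ, lpDualInvariant p π w → ∑' x, (f : ∀ _ : X, ℂ) x * w x = 0}

/-- Property `(T_{ℓ_p})` : for every orthogonal representation `π` of `G` on `ℓ_p`, the
restriction of `π` to `ℓ_p'(π)` (to `ℓ_1/ℓ_1^{π(G)}` when `p = 1`) has no sequence of
almost invariant vectors. -/
def HasTlp (G : Type*) [Group G] [TopologicalSpace G] (p : ℝ) : Prop :=
  ∀ π : IsomRep G (lpSeq ℕ p),
    (1 < p → ¬ HasAIVin π (lpComplement p π)) ∧ (p = 1 → ¬ HasAIVquot π)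

/-- A (BL) orthogonal representation of `G` on `ℓ_p(X)` together with all its Mazur
conjugates : representations on every `ℓ_q(X)` given by the Banach–Lamperti formula
`(π^q(g) f)(x) = h_g(x) · f(σ_g(x))` with the *same* data `(h_g, σ_g)`, where `σ_g` is a
permutation of `X` and `|h_g| ≡ 1`. -/
structure SeqBLFamily (G : Type*) [Group G] [TopologicalSpace G] (X : Type*) where
  h : G → X → ℂ
  σ : G → Equiv.Perm X
  habs : ∀ (g : G) (x : X), ‖h g x‖ = 1
  rep : (q : ℝ) → 1 ≤ q → IsomRep G (lpSeq X q)
  formula : ∀ (q : ℝ) (hq : 1 ≤ q) (g : G) (f : lpSeq X q) (x : X),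
    ((rep q hq).ρ g f : ∀ _ : X, ℂ) x = h g x * (f : ∀ _ : X, ℂ) (σ g x)

/-- The fixed-point spectrum `𝓕_{ℓ^∞}(G,π)` of a (BL) representation on `ℓ_p(X)` and its
Mazur conjugates. -/
def SeqBLFamily.spectrum {G : Type*} [Group G] [TopologicalSpace G] {X : Type*}
    (F : SeqBLFamily G X) : Set ℝ :=
  {q : ℝ | ∃ hq : 1 ≤ q, H1Trivial (F.rep q hq)}

/-- The orbit of a point of `X` under the action associated to a (BL) family. -/
def SeqBLFamily.orbit {G : Type*} [Group G] [TopologicalSpace G] {X : Type*}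
    (F : SeqBLFamily G X) (x : X) : Set X :=
  ⋃ g : G, {F.σ g x}

variable {E : Type*} [AddCommGroup E] [SMul ℂ E] [Norm E]

/-- Continuity of a two-variable map into a normed module. -/
def NormContinuous2 (c : G → G → E) : Prop :=
  ∀ (x : G × G) (ε : ℝ), 0 < ε → ∀ᶠ y in nhds x, ‖c y.1 y.2 - c x.1 x.2‖ < ε

/-- A continuous inhomogeneous `2`-cocycle for `π`. -/
def Is2Cocycle (π : IsomRep G E) (c : G → G → E) : Prop :=
  NormContinuous2 c ∧ ∀ g₁ g₂ g₃ : G,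
    π.ρ g₁ (c g₂ g₃) - c (g₁ * g₂) g₃ + c g₁ (g₂ * g₃) - c g₁ g₂ = 0

/-- An inhomogeneous `2`-coboundary for `π`. -/
def Is2Coboundary (π : IsomRep G E) (c : G → G → E) : Prop :=
  ∃ b : G → E, NormContinuous b ∧
    ∀ g₁ g₂ : G, c g₁ g₂ = π.ρ g₁ (b g₂) - b (g₁ * g₂) + b g₁

/-- `H²(G,π)` is reduced : the space of `2`-coboundaries is closed in the space of
`2`-cocycles for the topology of uniform convergence on finite subsets. -/
def H2Reduced (π : IsomRep G E) : Prop :=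
  ∀ c : G → G → E, Is2Cocycle π c →
    (∀ (S : Finset (G × G)) (ε : ℝ), 0 < ε →
      ∃ c' : G → G → E, Is2Coboundary π c' ∧ ∀ s ∈ S, ‖c s.1 s.2 - c' s.1 s.2‖ < ε) →
    Is2Coboundary π c

/-- `G` is finitely presented. -/
def IsFinitelyPresented (G : Type*) [Group G] : Prop :=
  ∃ (n : ℕ) (rels : Set (FreeGroup (Fin n))), rels.Finite ∧ Nonempty (G ≃* PresentedGroup rels)

end Extra

/-!
A cocycle `b` for `π^p` is also a cocycle for `π^q`, hence `b_g = f - π^q(g) f` with `f ∈ ℓ_q`.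
The Mazur map `M = M_{p,q}` is `p/q`-Hölder pointwise, so `g ↦ M f - π^q(g) (M f)` is again
a cocycle for `π^q`, hence equal to `g ↦ w - π^q(g) w` with `w ∈ ℓ_q`. Then `M f - w` is a
function vanishing at infinity and invariant under the (BL) formula. Its modulus is constant on
orbits, so where it is nonzero the orbit is finite and its restriction to that orbit is a nonzero
invariant vector of `π^p`. Thus `M f = w ∈ ℓ_q`, i.e. `f ∈ ℓ_p`, and `b` is a coboundary for `π^p`.
-/

open Topology

namespace Real

theorem mul_rpow_sub_one_le_rpow {δ r θ : ℝ} (hδ : 0 ≤ δ) (hδr : δ ≤ r) (hθ : θ ≤ 1) :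
    δ * r ^ (θ - 1) ≤ δ ^ θ := by
  rcases hδ.eq_or_lt with rfl | hδ
  · simpa using rpow_nonneg le_rfl θ
  calc δ * r ^ (θ - 1) ≤ δ * δ ^ (θ - 1) :=
        mul_le_mul_of_nonneg_left (rpow_le_rpow_of_nonpos hδ hδr (by linarith)) hδ.le
    _ = δ ^ θ := by rw [rpow_sub_one hδ.ne', mul_div_cancel₀ _ hδ.ne']

theorem mul_abs_rpow_sub_one_sub_le {s r θ : ℝ} (hs : 0 ≤ s) (hsr : s ≤ r) (hθ0 : 0 ≤ θ)
    (hθ1 : θ ≤ 1) : s * |r ^ (θ - 1) - s ^ (θ - 1)| ≤ (r - s) * r ^ (θ - 1) := by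
  rcases hs.eq_or_lt with rfl | hs
  · simpa using mul_nonneg hsr (rpow_nonneg hsr _)
  have hr : 0 < r := hs.trans_le hsr
  rw [abs_of_nonpos (sub_nonpos.2 (rpow_le_rpow_of_nonpos hs hsr (by linarith))), neg_sub,
    mul_sub, sub_mul, rpow_sub_one hs.ne', rpow_sub_one hr.ne', mul_div_cancel₀ _ hs.ne',
    mul_div_cancel₀ _ hr.ne']
  linarith [rpow_le_rpow hs.le hsr hθ0]

end Real

/-- The Mazur map `sgn z · |z|^θ` on scalars; `M_{p,q}` acts pointwise as `mazurPow (p / q)`. -/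
def mazurPow (θ : ℝ) (z : ℂ) : ℂ := z * ((‖z‖ ^ (θ - 1) : ℝ) : ℂ)

theorem norm_mazurPow {θ : ℝ} (hθ : 0 < θ) (z : ℂ) : ‖mazurPow θ z‖ = ‖z‖ ^ θ := by
  rcases eq_or_ne z 0 with rfl | hz
  · simp [mazurPow, Real.zero_rpow hθ.ne']
  rw [mazurPow, norm_mul, Complex.norm_real, Real.norm_of_nonneg (by positivity),
    Real.rpow_sub_one (norm_ne_zero_iff.2 hz), mul_div_cancel₀ _ (norm_ne_zero_iff.2 hz)]

theorem mazurPow_mul_of_norm_eq_one (θ : ℝ) {c : ℂ} (hc : ‖c‖ = 1) (z : ℂ) :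
    mazurPow θ (c * z) = c * mazurPow θ z := by
  simp only [mazurPow, norm_mul, hc, one_mul]
  ring

theorem tendsto_mazurPow_nhds_zero {θ : ℝ} (hθ : 0 < θ) :
    Tendsto (mazurPow θ) (𝓝 0) (𝓝 0) := by
  rw [tendsto_zero_iff_norm_tendsto_zero]
  simpa [norm_mazurPow hθ, Real.zero_rpow hθ.ne'] using
    (tendsto_norm_zero (E := ℂ)).rpow_const (Or.inr hθ.le)

theorem norm_mazurPow_sub_le_of_norm_le {θ : ℝ} (hθ0 : 0 < θ) (hθ1 : θ ≤ 1) {a b : ℂ}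
    (hba : ‖b‖ ≤ ‖a‖) : ‖mazurPow θ a - mazurPow θ b‖ ≤ 2 * ‖a - b‖ ^ θ := by
  rcases le_or_gt ‖a‖ ‖a - b‖ with hsmall | hlarge
  · have ha := Real.rpow_le_rpow (norm_nonneg a) hsmall hθ0.le
    have hb := Real.rpow_le_rpow (norm_nonneg b) (hba.trans hsmall) hθ0.le
    have := norm_sub_le (mazurPow θ a) (mazurPow θ b)
    rw [norm_mazurPow hθ0, norm_mazurPow hθ0] at this
    linarith
  have hsplit : mazurPow θ a - mazurPow θ b = (a - b) * ((‖a‖ ^ (θ - 1) : ℝ) : ℂ) +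
      b * ((‖a‖ ^ (θ - 1) - ‖b‖ ^ (θ - 1) : ℝ) : ℂ) := by
    simp only [mazurPow]
    push_cast
    ring
  have hterm₁ := Real.mul_rpow_sub_one_le_rpow (norm_nonneg (a - b)) hlarge.le hθ1
  have hterm₂ := Real.mul_abs_rpow_sub_one_sub_le (norm_nonneg b) hba hθ0.le hθ1
  have hnorms : (‖a‖ - ‖b‖) * ‖a‖ ^ (θ - 1) ≤ ‖a - b‖ * ‖a‖ ^ (θ - 1) :=
    mul_le_mul_of_nonneg_right (norm_sub_norm_le a b) (by positivity)
  calc ‖mazurPow θ a - mazurPow θ b‖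
      ≤ ‖a - b‖ * ‖a‖ ^ (θ - 1) + ‖b‖ * |‖a‖ ^ (θ - 1) - ‖b‖ ^ (θ - 1)| := by
        rw [hsplit]
        refine (norm_add_le _ _).trans_eq ?_
        simp only [norm_mul, Complex.norm_real, Real.norm_eq_abs,
          abs_of_nonneg (Real.rpow_nonneg (norm_nonneg a) _)]
    _ ≤ 2 * ‖a - b‖ ^ θ := by linarith

theorem norm_mazurPow_sub_le {θ : ℝ} (hθ0 : 0 < θ) (hθ1 : θ ≤ 1) (a b : ℂ) :
    ‖mazurPow θ a - mazurPow θ b‖ ≤ 2 * ‖a - b‖ ^ θ := by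
  rcases le_total ‖b‖ ‖a‖ with h | h
  · exact norm_mazurPow_sub_le_of_norm_le hθ0 hθ1 h
  · rw [norm_sub_rev, norm_sub_rev a]
    exact norm_mazurPow_sub_le_of_norm_le hθ0 hθ1 h

theorem norm_mazurPow_sub_rpow_le {p q : ℝ} (hp : 0 < p) (hpq : p ≤ q) (a b : ℂ) :
    ‖mazurPow (p / q) a - mazurPow (p / q) b‖ ^ q ≤ 2 ^ q * ‖a - b‖ ^ p := by
  have hq : 0 < q := hp.trans_le hpq
  calc ‖mazurPow (p / q) a - mazurPow (p / q) b‖ ^ q ≤ (2 * ‖a - b‖ ^ (p / q)) ^ q :=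
        Real.rpow_le_rpow (norm_nonneg _)
          (norm_mazurPow_sub_le (by positivity) ((div_le_one hq).2 hpq) a b) hq.le
    _ = 2 ^ q * ‖a - b‖ ^ p := by
        rw [Real.mul_rpow zero_le_two (by positivity), ← Real.rpow_mul (norm_nonneg _),
          div_mul_cancel₀ p hq.ne']

section lp

variable {X E F : Type*} [NormedAddCommGroup E] [NormedAddCommGroup F]

theorem Memℓp.of_norm_rpow_le {p q C : ℝ} (hp : 0 < p) (hq : 0 ≤ q) {a : X → E} {c : X → F}
    (hc : Memℓp c (ENNReal.ofReal p)) (h : ∀ x, ‖a x‖ ^ q ≤ C * ‖c x‖ ^ p) :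
    Memℓp a (ENNReal.ofReal q) := by
  apply memℓp_gen
  rw [ENNReal.toReal_ofReal hq]
  have hcs := hc.summable (by rwa [ENNReal.toReal_ofReal hp.le])
  rw [ENNReal.toReal_ofReal hp.le] at hcs
  exact Summable.of_nonneg_of_le (fun x => by positivity) h (hcs.mul_left C)

theorem Memℓp.tendsto_cofinite_zero {p : ℝ} (hp : 0 < p) {f : X → E}
    (hf : Memℓp f (ENNReal.ofReal p)) : Tendsto f cofinite (𝓝 0) := by
  have hsum := hf.summable (by rwa [ENNReal.toReal_ofReal hp.le])
  rw [ENNReal.toReal_ofReal hp.le] at hsum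
  rw [tendsto_zero_iff_norm_tendsto_zero]
  simpa [← Real.rpow_mul (norm_nonneg _), hp.ne', Real.zero_rpow] using
    hsum.tendsto_cofinite_zero.rpow_const (p := p⁻¹) (Or.inr (by positivity))

theorem lp.norm_rpow_le_of_norm_rpow_le {p q C : ℝ} (hp : 0 < p) (hq : 0 < q)
    (a : lp (fun _ : X => E) (ENNReal.ofReal q)) (c : lp (fun _ : X => F) (ENNReal.ofReal p))
    (h : ∀ x, ‖a x‖ ^ q ≤ C * ‖c x‖ ^ p) : ‖a‖ ^ q ≤ C * ‖c‖ ^ p := by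
  have ha := lp.norm_rpow_eq_tsum (by rwa [ENNReal.toReal_ofReal hq.le]) a
  have hc := lp.norm_rpow_eq_tsum (by rwa [ENNReal.toReal_ofReal hp.le]) c
  have has := (lp.memℓp a).summable (by rwa [ENNReal.toReal_ofReal hq.le])
  have hcs := (lp.memℓp c).summable (by rwa [ENNReal.toReal_ofReal hp.le])
  rw [ENNReal.toReal_ofReal hq.le] at ha has
  rw [ENNReal.toReal_ofReal hp.le] at hc hcs
  rw [ha, hc, ← tsum_mul_left]
  exact has.tsum_le_tsum h (hcs.mul_left C)

end lp

theorem lp.norm_linearMapOfLE_le {X : Type*} {p q : ℝ} (hp : 0 < p) (hpq : p ≤ q)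
    (f : lpSeq X p) :
    ‖lp.linearMapOfLE ℂ (fun _ : X => ℂ) (ENNReal.ofReal_le_ofReal hpq) f‖ ≤ ‖f‖ := by
  have hq : 0 < q := hp.trans_le hpq
  have hpow : ‖lp.linearMapOfLE ℂ (fun _ : X => ℂ) (ENNReal.ofReal_le_ofReal hpq) f‖ ^ q ≤
      ‖f‖ ^ (q - p) * ‖f‖ ^ p := by
    refine lp.norm_rpow_le_of_norm_rpow_le hp hq _ f fun x => ?_
    have hfx : ‖f x‖ ≤ ‖f‖ := lp.norm_apply_le_norm (ENNReal.ofReal_pos.2 hp).ne' f x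
    calc ‖f x‖ ^ q = ‖f x‖ ^ (q - p) * ‖f x‖ ^ p := by
          rw [← Real.rpow_add' (norm_nonneg _) (by linarith), sub_add_cancel]
      _ ≤ ‖f‖ ^ (q - p) * ‖f x‖ ^ p := by gcongr
  rw [← Real.rpow_add' (lp.norm_nonneg' f) (by linarith : q - p + p ≠ 0), sub_add_cancel] at hpow
  exact (Real.rpow_le_rpow_iff (lp.norm_nonneg' _) (lp.norm_nonneg' f) hq).1 hpow

section NormContinuous

variable {G E F : Type*} [TopologicalSpace G] [NormedAddCommGroup E] [NormedAddCommGroup F]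

theorem normContinuous_iff_tendsto {b : G → E} :
    NormContinuous b ↔ ∀ g₀, Tendsto (fun g => ‖b g - b g₀‖) (𝓝 g₀) (𝓝 0) := by
  simp only [NormContinuous, Metric.tendsto_nhds, Real.dist_eq, sub_zero, abs_norm]

theorem NormContinuous.of_norm_sub_rpow_le {b : G → E} {β : G → F} {p q C : ℝ} (hp : 0 < p)
    (hq : 0 < q) (hb : NormContinuous b) (h : ∀ g g₀, ‖β g - β g₀‖ ^ q ≤ C * ‖b g - b g₀‖ ^ p) :
    NormContinuous β := by
  rw [normContinuous_iff_tendsto] at hb ⊢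
  intro g₀
  have hlim : Tendsto (fun g => (C * ‖b g - b g₀‖ ^ p) ^ q⁻¹) (𝓝 g₀) (𝓝 0) := by
    simpa [Real.zero_rpow hp.ne', Real.zero_rpow (inv_ne_zero hq.ne')] using
      (((hb g₀).rpow_const (Or.inr hp.le)).const_mul C).rpow_const (Or.inr (inv_nonneg.2 hq.le))
  refine squeeze_zero (fun g => norm_nonneg _) (fun g => ?_) hlim
  calc ‖β g - β g₀‖ = (‖β g - β g₀‖ ^ q) ^ q⁻¹ :=
        (Real.rpow_rpow_inv (norm_nonneg _) hq.ne').symm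
    _ ≤ (C * ‖b g - b g₀‖ ^ p) ^ q⁻¹ :=
        Real.rpow_le_rpow (by positivity) (h g g₀) (inv_nonneg.2 hq.le)

end NormContinuous

namespace SeqBLFamily

variable {G : Type*} [Group G] [TopologicalSpace G] {X : Type*} (F : SeqBLFamily G X)

/-- The (BL) formula extended to all functions, so that formal coboundaries `w - act g w` make
sense for `w` outside every `ℓ_q`. -/
def act (g : G) (u : X → ℂ) : X → ℂ := fun x => F.h g x * u (F.σ g x)

theorem coe_rep_apply {q : ℝ} (hq : 1 ≤ q) (g : G) (f : lpSeq X q) :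
    ⇑((F.rep q hq).ρ g f) = F.act g f :=
  funext (F.formula q hq g f)

theorem h_ne_zero (g : G) (x : X) : F.h g x ≠ 0 := by
  rw [← norm_ne_zero_iff, F.habs]
  exact one_ne_zero

theorem act_sub (g : G) (u v : X → ℂ) : F.act g (u - v) = F.act g u - F.act g v := by
  ext x
  simp only [act, Pi.sub_apply]
  ring

theorem act_comp_mazurPow (θ : ℝ) (g : G) (u : X → ℂ) :
    F.act g (mazurPow θ ∘ u) = mazurPow θ ∘ F.act g u := by
  ext x
  exact (mazurPow_mul_of_norm_eq_one θ (F.habs g x) _).symm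

open Classical in
/-- `π(gg') = π(g) π(g')` evaluated on the Dirac mass at `z`, at the point `x`. -/
theorem ite_σ_mul_eq (g g' : G) (x z : X) :
    (if F.σ (g * g') x = z then F.h (g * g') x else 0) =
      F.h g x * if F.σ g' (F.σ g x) = z then F.h g' (F.σ g x) else 0 := by
  have key := congrFun (congrArg (⇑) ((F.rep 1 le_rfl).map_mul' g g' (lp.single _ z 1))) x
  simpa only [coe_rep_apply, act, lp.single_apply, Pi.single_apply, mul_ite, mul_one,
    mul_zero] using key

theorem σ_mul_apply (g g' : G) (x : X) : F.σ (g * g') x = F.σ g' (F.σ g x) := by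
  by_contra hne
  have key := F.ite_σ_mul_eq g g' x (F.σ g' (F.σ g x))
  rw [if_neg hne, if_pos rfl] at key
  exact mul_ne_zero (F.h_ne_zero _ _) (F.h_ne_zero _ _) key.symm

theorem h_mul_apply (g g' : G) (x : X) : F.h (g * g') x = F.h g x * F.h g' (F.σ g x) := by
  simpa [F.σ_mul_apply] using F.ite_σ_mul_eq g g' x (F.σ g' (F.σ g x))

theorem σ_one_apply (x : X) : F.σ 1 x = x :=
  (F.σ 1).injective (by rw [← F.σ_mul_apply, one_mul])

theorem σ_inv_apply_σ (g : G) (x : X) : F.σ g⁻¹ (F.σ g x) = x := by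
  rw [← F.σ_mul_apply, mul_inv_cancel, F.σ_one_apply]

theorem act_mul (g g' : G) (u : X → ℂ) : F.act (g * g') u = F.act g (F.act g' u) := by
  ext x
  simp only [act, F.σ_mul_apply, F.h_mul_apply]
  ring

theorem mem_orbit_iff {x y : X} : y ∈ F.orbit x ↔ ∃ g, F.σ g x = y := by
  simp [orbit, eq_comm]

theorem mem_orbit_self (x : X) : x ∈ F.orbit x :=
  F.mem_orbit_iff.2 ⟨1, F.σ_one_apply x⟩

theorem σ_mem_orbit_iff (g : G) {x y : X} : F.σ g y ∈ F.orbit x ↔ y ∈ F.orbit x := by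
  simp only [mem_orbit_iff]
  constructor
  · rintro ⟨g', hg'⟩
    exact ⟨g' * g⁻¹, by rw [F.σ_mul_apply, hg', F.σ_inv_apply_σ]⟩
  · rintro ⟨g', rfl⟩
    exact ⟨g' * g, F.σ_mul_apply g' g x⟩

theorem norm_apply_eq_of_mem_orbit {d : X → ℂ} (hd : ∀ g, F.act g d = d) {x y : X}
    (hy : y ∈ F.orbit x) : ‖d y‖ = ‖d x‖ := by
  obtain ⟨g, rfl⟩ := F.mem_orbit_iff.1 hy
  rw [← congrFun (hd g) x]
  simp [act, F.habs]

theorem act_indicator_orbit {d : X → ℂ} (hd : ∀ g, F.act g d = d) (g : G) (x : X) :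
    F.act g ((F.orbit x).indicator d) = (F.orbit x).indicator d := by
  classical
  ext y
  simp only [act, Set.indicator_apply, F.σ_mem_orbit_iff]
  split_ifs
  · exact congrFun (hd g) y
  · exact mul_zero _

/-- If `d x ≠ 0`, then `‖d‖ = ‖d x‖` on the orbit of `x`, so decay at infinity forces the orbit to
be finite, and the restriction of `d` to it is a nonzero invariant vector. -/
theorem eq_zero_of_forall_act_eq {q : ℝ} (hq : 1 ≤ q)
    (hnoinv : ∀ f : lpSeq X q, (∀ g, (F.rep q hq).ρ g f = f) → f = 0) {d : X → ℂ}
    (hd : ∀ g, F.act g d = d) (hd0 : Tendsto d cofinite (𝓝 0)) : d = 0 := by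
  ext x
  by_contra hx
  have hfin : (F.orbit x).Finite := by
    have hsmall := (tendsto_zero_iff_norm_tendsto_zero.1 hd0).eventually
      (gt_mem_nhds (norm_pos_iff.2 hx))
    refine (eventually_cofinite.1 hsmall).subset fun y hy => ?_
    simp [F.norm_apply_eq_of_mem_orbit hd hy]
  have hmem : Memℓp ((F.orbit x).indicator d) (ENNReal.ofReal q) :=
    (memℓp_zero (hfin.subset Set.support_indicator_subset)).of_exponent_ge (by simp)
  have hinv := hnoinv ⟨_, hmem⟩ fun g =>
    lp.ext (by rw [coe_rep_apply]; exact F.act_indicator_orbit hd g x)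
  exact hx (by
    simpa [Set.indicator_of_mem (F.mem_orbit_self x)] using congrFun (congrArg (⇑) hinv) x)

theorem eq_of_forall_sub_act_eq {q : ℝ} (hq : 1 ≤ q)
    (hnoinv : ∀ f : lpSeq X q, (∀ g, (F.rep q hq).ρ g f = f) → f = 0) {w w' : X → ℂ}
    (hw : Tendsto w cofinite (𝓝 0)) (hw' : Tendsto w' cofinite (𝓝 0))
    (h : ∀ g, w - F.act g w = w' - F.act g w') : w = w' := by
  refine sub_eq_zero.1 (F.eq_zero_of_forall_act_eq hq hnoinv (fun g => ?_)
    (by rw [← sub_zero (0 : ℂ)]; exact hw.sub hw'))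
  rw [act_sub]
  exact (sub_eq_sub_iff_sub_eq_sub.1 (h g)).symm

theorem isCoboundary_rep_iff {q : ℝ} (hq : 1 ≤ q) (b : G → lpSeq X q) :
    IsCoboundary (F.rep q hq) b ↔ ∃ f : lpSeq X q, ∀ g, ⇑(b g) = ⇑f - F.act g f := by
  refine exists_congr fun f => forall_congr' fun g => ?_
  rw [← F.coe_rep_apply hq, ← lp.coeFn_sub]
  exact ⟨congrArg _, lp.ext⟩

theorem isCocycle_of_coe_eq_sub_act {q : ℝ} (hq : 1 ≤ q) {β : G → lpSeq X q}
    (hβc : NormContinuous β) {w : X → ℂ} (hβ : ∀ g, ⇑(β g) = w - F.act g w) :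
    IsCocycle (F.rep q hq) β :=
  ⟨hβc, fun g g' => lp.ext <| by
    rw [lp.coeFn_add, F.coe_rep_apply, hβ, hβ, hβ, act_mul, act_sub]
    abel⟩

theorem isCocycle_linearMapOfLE {p q : ℝ} (hp : 1 ≤ p) (hpq : p ≤ q) {b : G → lpSeq X p}
    (hb : IsCocycle (F.rep p hp) b) :
    IsCocycle (F.rep q (hp.trans hpq))
      (lp.linearMapOfLE ℂ (fun _ : X => ℂ) (ENNReal.ofReal_le_ofReal hpq) ∘ b) := by
  refine ⟨fun g₀ ε hε => ?_, fun g g' => lp.ext ?_⟩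
  · filter_upwards [hb.1 g₀ ε hε] with g hg
    rw [Function.comp_apply, Function.comp_apply, ← map_sub]
    exact (lp.norm_linearMapOfLE_le (by linarith) hpq _).trans_lt hg
  · simp only [Function.comp_apply, lp.coe_linearMapOfLE_apply, lp.coeFn_add, F.coe_rep_apply,
      hb.2 g g']

theorem exists_isCocycle_sub_act_mazurPow {p q : ℝ} (hp : 1 ≤ p) (hpq : p ≤ q)
    {b : G → lpSeq X p} (hb : NormContinuous b) {f : X → ℂ} (hf : ∀ g, ⇑(b g) = f - F.act g f) :
    ∃ β : G → lpSeq X q, IsCocycle (F.rep q (hp.trans hpq)) β ∧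
      ∀ g, ⇑(β g) = mazurPow (p / q) ∘ f - F.act g (mazurPow (p / q) ∘ f) := by
  have hp0 : 0 < p := by linarith
  have hq0 : 0 < q := by linarith
  have : Fact (1 ≤ ENNReal.ofReal p) := ⟨ENNReal.one_le_ofReal.2 hp⟩
  have : Fact (1 ≤ ENNReal.ofReal q) := ⟨ENNReal.one_le_ofReal.2 (hp.trans hpq)⟩
  set w := mazurPow (p / q) ∘ f
  have hw : ∀ g x, (w - F.act g w) x = mazurPow (p / q) (f x) - mazurPow (p / q) (f x - b g x) :=
    fun g x => by rw [act_comp_mazurPow, hf, Pi.sub_apply, Pi.sub_apply, _root_.sub_sub_cancel]; rfl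
  have hmem : ∀ g, Memℓp (w - F.act g w) (ENNReal.ofReal q) := fun g =>
    (lp.memℓp (b g)).of_norm_rpow_le (C := 2 ^ q) hp0 hq0.le fun x => by
      simpa [hw] using norm_mazurPow_sub_rpow_le hp0 hpq (f x) (f x - b g x)
  let β : G → lpSeq X q := fun g => ⟨w - F.act g w, hmem g⟩
  have hβc : NormContinuous β := by
    refine hb.of_norm_sub_rpow_le (C := 2 ^ q) hp0 hq0 fun g g₀ =>
      lp.norm_rpow_le_of_norm_rpow_le hp0 hq0 _ _ fun x => ?_
    have key := norm_mazurPow_sub_rpow_le hp0 hpq (f x - b g₀ x) (f x - b g x)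
    rw [_root_.sub_sub_sub_cancel_left] at key
    rw [lp.coeFn_sub, lp.coeFn_sub, Pi.sub_apply, Pi.sub_apply]
    change ‖(w - F.act g w) x - (w - F.act g₀ w) x‖ ^ q ≤ _
    rwa [hw, hw, _root_.sub_sub_sub_cancel_left]
  exact ⟨β, F.isCocycle_of_coe_eq_sub_act _ hβc fun g => rfl, fun g => rfl⟩

end SeqBLFamily

theorem memℓp_of_memℓp_comp_mazurPow {X : Type*} {p q : ℝ} (hp : 0 < p) (hq : 0 < q)
    {f : X → ℂ} (h : Memℓp (mazurPow (p / q) ∘ f) (ENNReal.ofReal q)) :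
    Memℓp f (ENNReal.ofReal p) :=
  h.of_norm_rpow_le (C := 1) hq hp.le fun x => by
    rw [one_mul, Function.comp_apply, norm_mazurPow (by positivity),
      ← Real.rpow_mul (norm_nonneg _), div_mul_cancel₀ p hq.ne']

theorem h1Trivial_of_conjugate_and_positive_general (G : Type*) [Group G] [TopologicalSpace G]
    {X : Type*}
    (p q : ℝ) (hp : 1 ≤ p) (hpq : p < q)
    (F : SeqBLFamily G X)
    (hnoinv : ∀ f : lpSeq X p, (∀ g : G, (F.rep p hp).ρ g f = f) → f = 0)
    (h1 : H1Trivial (F.rep q (hp.trans hpq.le))) :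
    H1Trivial (F.rep p hp) := by
  intro b hb
  have hp0 : 0 < p := by linarith
  have hq0 : 0 < q := by linarith
  obtain ⟨f, hf⟩ :=
    (F.isCoboundary_rep_iff _ _).1 (h1 _ (F.isCocycle_linearMapOfLE hp hpq.le hb))
  have hbf : ∀ g, ⇑(b g) = ⇑f - F.act g f := fun g => by simpa using hf g
  obtain ⟨β, hβ, hβf⟩ := F.exists_isCocycle_sub_act_mazurPow hp hpq.le hb.1 hbf
  obtain ⟨w, hw⟩ := (F.isCoboundary_rep_iff _ β).1 (h1 β hβ)
  have hfw : mazurPow (p / q) ∘ ⇑f = w :=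
    F.eq_of_forall_sub_act_eq hp hnoinv
      ((tendsto_mazurPow_nhds_zero (by positivity)).comp ((lp.memℓp f).tendsto_cofinite_zero hq0))
      ((lp.memℓp w).tendsto_cofinite_zero hq0) fun g => (hβf g).symm.trans (hw g)
  have hfp : Memℓp f (ENNReal.ofReal p) :=
    memℓp_of_memℓp_comp_mazurPow hp0 hq0 (hfw ▸ lp.memℓp w)
  exact (F.isCoboundary_rep_iff hp b).2 ⟨⟨f, hfp⟩, hbf⟩

/-- Lemma `lem-lp`. Let `1 ≤ p < q < ∞` and let `π^p` be a (BL)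
orthogonal representation on `ℓ_p` without nonzero invariant vectors, with Mazur conjugate
`π^q` and positive part `|π^p|`. If `H¹(G,π^q) = 0` and `H¹(G,|π^p|) = 0`, then
`H¹(G,π^p) = 0`. -/
theorem h1Trivial_of_conjugate_and_positive (G : Type*) [Group G] [TopologicalSpace G]
    [IsTopologicalGroup G]
    {X : Type*} [Countable X]
    (p q : ℝ) (hp : 1 ≤ p) (hpq : p < q)
    (F : SeqBLFamily G X)
    (A : SeqBLFamily G X) (hσA : ∀ g x, A.σ g x = F.σ g x) (hhA : ∀ g x, A.h g x = 1)
    (hnoinv : ∀ f : lpSeq X p, (∀ g : G, (F.rep p hp).ρ g f = f) → f = 0)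
    (h1 : H1Trivial (F.rep q (hp.trans hpq.le)))
    (h2 : H1Trivial (A.rep p hp)) :
    H1Trivial (F.rep p hp) :=
  h1Trivial_of_conjugate_and_positive_general G p q hp hpq F hnoinv h1

end
end

section
/- Let 1 ≤ p < q < r < ∞, let (X,μ) be a standard Borel measure space with μ finite, let G be a topological group, and let π^p : G → O(L_p(X,μ)) be a (BL) measure-preserving ergodic orthogonal representation with Mazur-conjugate representations π^q on L_q(X,μ) and π^r on L_r(X,μ). If H^1(G,π^p) = 0 and H^1(G,π^r) = 0, then H^1(G,π^q) = 0. -/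
open MeasureTheory ENNReal Filter Set

noncomputable section

variable {G : Type*} [Group G] [TopologicalSpace G]
variable {E : Type*} [AddCommGroup E] [SMul ℂ E] [Norm E]

/-! ### `L_p(X,μ)` spaces and (BL) representations -/

variable {X : Type*} [MeasurableSpace X]

/-!
Since `μ` is finite, a `π^q`-cocycle `b` is also a `π^p`-cocycle, so `H¹(G,π^p) = 0` writes it
as `b_g = f - π^p(g) f` with `f ∈ L_p`. The Mazur map `M = M_{q,r}` is `(q/r)`-Hölder from `L_q` to
`L_r` and commutes with the (BL) operators, so `c_g = M(f) - M(π^p(g) f)` is an `L_r`-cocycle and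
`H¹(G,π^r) = 0` gives `c_g = V - π^r(g) V`. Then `W = M(f) - V` satisfies `W = h_g · W ∘ φ_g`,
so `|W|` is invariant and, by ergodicity, essentially bounded. Hence
`M(f) = W + V ∈ L_r`, i.e. `f ∈ L_q`, and `f` is a potential for `b` in `L_q`.
-/

open Topology

/-- `signedRpow (q / r)` is the pointwise form of the Mazur map `M_{q,r}`. -/
def signedRpow (α : ℝ) (z : ℂ) : ℂ := z * ((‖z‖ ^ (α - 1) : ℝ) : ℂ)

section SignedRpow

variable {α : ℝ}

theorem norm_signedRpow (hα : 0 < α) (z : ℂ) : ‖signedRpow α z‖ = ‖z‖ ^ α := by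
  rcases eq_or_ne z 0 with rfl | hz
  · simp [signedRpow, Real.zero_rpow hα.ne']
  · rw [signedRpow, norm_mul, Complex.norm_real, Real.norm_of_nonneg (by positivity),
      ← Real.rpow_one_add' (norm_nonneg z) (by rw [add_sub_cancel]; exact hα.ne'), add_sub_cancel]

theorem signedRpow_mul_of_norm_eq_one {c : ℂ} (hc : ‖c‖ = 1) (z : ℂ) :
    signedRpow α (c * z) = c * signedRpow α z := by
  rw [signedRpow, signedRpow, norm_mul, hc, one_mul, mul_assoc]

theorem measurable_signedRpow : Measurable (signedRpow α) := by
  unfold signedRpow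
  fun_prop

theorem rpow_sub_one_mul_le_rpow {a d : ℝ} (hd : 0 < d) (hda : d ≤ a) (hα : α ≤ 1) :
    a ^ (α - 1) * d ≤ d ^ α :=
  calc a ^ (α - 1) * d ≤ d ^ (α - 1) * d :=
        mul_le_mul_of_nonneg_right (Real.rpow_le_rpow_of_nonpos hd hda (by linarith)) hd.le
    _ = d ^ α := by rw [← Real.rpow_add_one hd.ne', sub_add_cancel]

theorem norm_signedRpow_sub_le (hα₀ : 0 < α) (hα₁ : α ≤ 1) (z w : ℂ) :
    ‖signedRpow α z - signedRpow α w‖ ≤ 2 * ‖z - w‖ ^ α := by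
  rcases eq_or_ne z w with rfl | hzw
  · simp only [sub_self, norm_zero, Real.zero_rpow hα₀.ne']
    norm_num
  wlog hwz : ‖w‖ ≤ ‖z‖ generalizing z w
  · rw [norm_sub_rev, norm_sub_rev z]
    exact this w z hzw.symm (le_of_not_ge hwz)
  have hd : 0 < ‖z - w‖ := norm_pos_iff.2 (sub_ne_zero.2 hzw)
  set a := ‖z‖ with ha
  set b := ‖w‖ with hb
  set d := ‖z - w‖
  rcases lt_or_ge a d with had | hda
  · calc ‖signedRpow α z - signedRpow α w‖ ≤ a ^ α + b ^ α := by
          simpa only [norm_signedRpow hα₀] using norm_sub_le (signedRpow α z) (signedRpow α w)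
      _ ≤ d ^ α + d ^ α := by gcongr; linarith
      _ = 2 * d ^ α := by ring
  -- Split as `(z - w)|z|^{α-1} + w(|z|^{α-1} - |w|^{α-1})`; as `d ≤ |z|`, each term is `≤ d^α`.
  have hkey := rpow_sub_one_mul_le_rpow hd hda hα₁
  have hfirst : ‖(z - w) * ((a ^ (α - 1) : ℝ) : ℂ)‖ ≤ d ^ α := by
    rw [norm_mul, Complex.norm_real, Real.norm_of_nonneg (by positivity), mul_comm]
    exact hkey
  have hsecond : ‖w * ((a ^ (α - 1) - b ^ (α - 1) : ℝ) : ℂ)‖ ≤ d ^ α := by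
    rw [norm_mul, Complex.norm_real, Real.norm_eq_abs]
    rcases (norm_nonneg w).eq_or_lt with hw0 | hw0
    · rw [← hw0, zero_mul]
      positivity
    have hab : a ^ (α - 1) ≤ b ^ (α - 1) := Real.rpow_le_rpow_of_nonpos hw0 hwz (by linarith)
    have hba : b ^ α ≤ a ^ α := Real.rpow_le_rpow hw0.le hwz hα₀.le
    rw [abs_of_nonpos (by linarith), neg_sub, mul_sub, ← Real.rpow_one_add' hw0.le (by linarith)]
    calc b ^ (1 + (α - 1)) - b * a ^ (α - 1) ≤ a ^ (α - 1) * (a - b) := by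
          rw [add_sub_cancel, mul_sub, ← Real.rpow_add_one (hd.trans_le hda).ne', sub_add_cancel]
          linarith
      _ ≤ a ^ (α - 1) * d := by gcongr; exact norm_sub_norm_le z w
      _ ≤ d ^ α := hkey
  calc ‖signedRpow α z - signedRpow α w‖
      = ‖(z - w) * ((a ^ (α - 1) : ℝ) : ℂ) + w * ((a ^ (α - 1) - b ^ (α - 1) : ℝ) : ℂ)‖ := by
        rw [signedRpow, signedRpow, ← ha, ← hb, Complex.ofReal_sub]
        ring_nf
    _ ≤ d ^ α + d ^ α := (norm_add_le _ _).trans (add_le_add hfirst hsecond)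
    _ = 2 * d ^ α := by ring

end SignedRpow

theorem normContinuous_iff_continuous {G : Type*} [Group G] [TopologicalSpace G]
    {E : Type*} [SeminormedAddCommGroup E] [SMul ℂ E] {b : G → E} :
    NormContinuous b ↔ Continuous b := by
  simp only [NormContinuous, continuous_iff_continuousAt, ContinuousAt, Metric.tendsto_nhds,
    dist_eq_norm]

theorem continuous_of_edist_le_mul_rpow {T A B : Type*} [TopologicalSpace T]
    [PseudoEMetricSpace A] [PseudoEMetricSpace B] {b : T → A} {c : T → B} {C : ℝ≥0∞} {β : ℝ}
    (hC : C ≠ ∞) (hβ : 0 < β) (hb : Continuous b)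
    (hcb : ∀ t t₀, edist (c t) (c t₀) ≤ C * edist (b t) (b t₀) ^ β) : Continuous c := by
  refine continuous_iff_continuousAt.2 fun t₀ => tendsto_iff_edist_tendsto_0.2 ?_
  have hlim : Tendsto (fun t => C * edist (b t) (b t₀) ^ β) (𝓝 t₀) (𝓝 0) := by
    have := ENNReal.Tendsto.const_mul (((ENNReal.continuous_rpow_const (y := β)).tendsto 0).comp
      (tendsto_iff_edist_tendsto_0.1 (hb.tendsto t₀))) (Or.inr hC)
    simpa [ENNReal.zero_rpow_of_pos hβ] using this
  exact tendsto_of_tendsto_of_tendsto_of_le_of_le tendsto_const_nhds hlim (fun _ => bot_le)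
    fun t => hcb t t₀

theorem ErgodicFamily.exists_ae_le_of_measurable {G X : Type*} [MeasurableSpace X]
    {μ : Measure X} {φ : G → X → X} (herg : ErgodicFamily μ φ) {w : X → ℝ} (hw : Measurable w)
    (hinv : ∀ g, (fun x => w (φ g x)) =ᵐ[μ] w) : ∃ C : ℝ, ∀ᵐ x ∂μ, w x ≤ C := by
  have hsuper : ∀ n : ℕ, μ {x | (n : ℝ) < w x} = 0 ∨ μ {x | (n : ℝ) < w x}ᶜ = 0 := by
    refine fun n => herg _ (measurableSet_lt measurable_const hw) fun g =>
      measure_mono_null (fun x hx => ?_) (ae_iff.1 (hinv g))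
    intro heq
    simp only [Set.mem_symmDiff, mem_preimage, mem_ofPred_eq, heq] at hx
    tauto
  by_cases hnull : ∃ n : ℕ, μ {x | (n : ℝ) < w x} = 0
  · obtain ⟨n, hn⟩ := hnull
    refine ⟨n, ?_⟩
    filter_upwards [measure_eq_zero_iff_ae_notMem.1 hn] with x hx
    simpa using hx
  -- otherwise every superlevel set is conull, which forces `μ = 0`
  simp only [not_exists] at hnull
  have hall : ∀ᵐ x ∂μ, ∀ n : ℕ, (n : ℝ) < w x :=
    ae_all_iff.2 fun n => mem_ae_iff.2 ((hsuper n).resolve_left (hnull n))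
  refine ⟨0, ?_⟩
  filter_upwards [hall] with x hx
  obtain ⟨n, hn⟩ := exists_nat_ge (w x)
  exact absurd (hx n) hn.not_gt

theorem ErgodicFamily.exists_ae_le {G X : Type*} [MeasurableSpace X] {μ : Measure X}
    {φ : G → X → X} (herg : ErgodicFamily μ φ) (hφ : ∀ g, Measure.QuasiMeasurePreserving (φ g) μ μ)
    {w : X → ℝ} (hw : AEMeasurable w μ) (hinv : ∀ g, (fun x => w (φ g x)) =ᵐ[μ] w) :
    ∃ C : ℝ, ∀ᵐ x ∂μ, w x ≤ C := by
  obtain ⟨C, hC⟩ := herg.exists_ae_le_of_measurable hw.measurable_mk fun g =>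
    ((hφ g).ae_eq_comp hw.ae_eq_mk.symm).trans ((hinv g).trans hw.ae_eq_mk)
  exact ⟨C, by filter_upwards [hC, hw.ae_eq_mk] with x hx hwx using hwx ▸ hx⟩

section MazurEstimates

variable {X : Type*} [MeasurableSpace X] {μ : Measure X} {q r : ℝ}

theorem eLpNorm_signedRpow_sub_le (hq : 0 < q) (hqr : q ≤ r) (u v : X → ℂ) :
    eLpNorm (fun x => signedRpow (q / r) (u x) - signedRpow (q / r) (v x)) (.ofReal r) μ ≤
      2 * eLpNorm (u - v) (.ofReal q) μ ^ (q / r) := by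
  have hr : 0 < r := hq.trans_le hqr
  have hα : 0 < q / r := div_pos hq hr
  calc _ ≤ eLpNorm ((2 : ℝ) • fun x => ‖(u - v) x‖ ^ (q / r)) (.ofReal r) μ :=
        eLpNorm_mono_real fun x => norm_signedRpow_sub_le hα ((div_le_one hr).2 hqr) (u x) (v x)
    _ = 2 * eLpNorm (u - v) (.ofReal q) μ ^ (q / r) := by
        rw [eLpNorm_const_smul, eLpNorm_norm_rpow _ hα, ← ENNReal.ofReal_mul hr.le,
          mul_div_cancel₀ _ hr.ne']
        simp [Real.enorm_eq_ofReal_abs]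

theorem memLp_signedRpow_sub (hq : 0 < q) (hqr : q ≤ r) {u v : X → ℂ}
    (hu : AEStronglyMeasurable u μ) (hv : AEStronglyMeasurable v μ)
    (huv : MemLp (u - v) (.ofReal q) μ) :
    MemLp (fun x => signedRpow (q / r) (u x) - signedRpow (q / r) (v x)) (.ofReal r) μ :=
  ⟨((measurable_signedRpow.comp_aemeasurable hu.aemeasurable).sub
      (measurable_signedRpow.comp_aemeasurable hv.aemeasurable)).aestronglyMeasurable,
    (eLpNorm_signedRpow_sub_le hq hqr u v).trans_lt <| ENNReal.mul_lt_top (by simp) <|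
      ENNReal.rpow_lt_top_of_nonneg (div_pos hq (hq.trans_le hqr)).le huv.eLpNorm_ne_top⟩

theorem memLp_of_memLp_signedRpow (hq : 0 < q) (hr : 0 < r) {f : X → ℂ}
    (hf : AEStronglyMeasurable f μ)
    (hψ : MemLp (fun x => signedRpow (q / r) (f x)) (.ofReal r) μ) :
    MemLp f (.ofReal q) μ := by
  have hnorm : (fun x => ‖signedRpow (q / r) (f x)‖ ^ (r / q)) = fun x => ‖f x‖ := by
    ext x
    rw [norm_signedRpow (div_pos hq hr), ← Real.rpow_mul (norm_nonneg _),
      div_mul_div_cancel₀ hr.ne', div_self hq.ne', Real.rpow_one]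
  refine ⟨hf, ?_⟩
  rw [← eLpNorm_norm, ← hnorm, eLpNorm_norm_rpow _ (div_pos hr hq), ← ENNReal.ofReal_mul hq.le,
    mul_div_cancel₀ _ hq.ne']
  exact ENNReal.rpow_lt_top_of_nonneg (div_pos hr hq).le hψ.eLpNorm_ne_top

end MazurEstimates

theorem continuous_toLp_of_exponent_le {X E : Type*} [MeasurableSpace X] {μ : Measure X}
    [NormedAddCommGroup E] [IsFiniteMeasure μ] {p q : ℝ} [hp : Fact (1 ≤ ENNReal.ofReal p)]
    [Fact (1 ≤ ENNReal.ofReal q)] (hpq : p ≤ q) :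
    Continuous fun u : Lp E (.ofReal q) μ =>
      ((Lp.memLp u).mono_exponent (ENNReal.ofReal_le_ofReal hpq)).toLp u := by
  have hp0 : 0 < p := zero_lt_one.trans_le (ENNReal.one_le_ofReal.1 hp.out)
  have hexp : 0 ≤ 1 / p - 1 / q := sub_nonneg.2 (one_div_le_one_div_of_le hp0 hpq)
  refine continuous_of_edist_le_mul_rpow (C := μ univ ^ (1 / p - 1 / q))
    (ENNReal.rpow_ne_top_of_nonneg hexp (measure_ne_top μ _)) one_pos continuous_id fun u v => ?_
  rw [Lp.edist_def, Lp.edist_def, ENNReal.rpow_one, mul_comm,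
    eLpNorm_congr_ae ((MemLp.coeFn_toLp _).sub (MemLp.coeFn_toLp _))]
  simpa [hp0.le, (hp0.trans_le hpq).le] using
    eLpNorm_le_eLpNorm_mul_rpow_measure_univ (ENNReal.ofReal_le_ofReal hpq)
      ((Lp.aestronglyMeasurable u).sub (Lp.aestronglyMeasurable v))

namespace BLmpFamily

variable {G : Type*} [Group G] [TopologicalSpace G] {X : Type*} [MeasurableSpace X]
  {μ : Measure X} (F : BLmpFamily G μ)

theorem measurePreserving_φ (g : G) : MeasurePreserving (F.φ g) μ μ :=
  (F.isBL 1 le_rfl g).2.1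

theorem ae_norm_h (g : G) : ∀ᵐ x ∂μ, ‖F.h g x‖ = 1 :=
  (F.isBL 1 le_rfl g).2.2.1

theorem coeFn_rep {s : ℝ} (hs : 1 ≤ s) (g : G) (u : LpSp μ s) :
    ⇑((F.rep s hs).ρ g u) =ᵐ[μ] fun x => F.h g x * u (F.φ g x) :=
  (F.isBL s hs g).2.2.2 u

theorem comp_φ_ae_eq {β : Type*} {u v : X → β} (g : G) (huv : u =ᵐ[μ] v) :
    (fun x => u (F.φ g x)) =ᵐ[μ] fun x => v (F.φ g x) :=
  (F.measurePreserving_φ g).quasiMeasurePreserving.ae_eq_comp huv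

theorem rep_ae_eq_rep {s t : ℝ} (hs : 1 ≤ s) (ht : 1 ≤ t) (g : G) {u : LpSp μ s}
    {v : LpSp μ t} (huv : ⇑u =ᵐ[μ] ⇑v) :
    ⇑((F.rep s hs).ρ g u) =ᵐ[μ] ⇑((F.rep t ht).ρ g v) := by
  filter_upwards [F.coeFn_rep hs g u, F.coeFn_rep ht g v, F.comp_φ_ae_eq g huv]
    with x hu hv huv
  rw [hu, hv, huv]

theorem signedRpow_rep_ae_eq (α : ℝ) {s : ℝ} (hs : 1 ≤ s) (g : G) (u : LpSp μ s) :
    (fun x => signedRpow α ((F.rep s hs).ρ g u x)) =ᵐ[μ]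
      fun x => F.h g x * signedRpow α (u (F.φ g x)) := by
  filter_upwards [F.coeFn_rep hs g u, F.ae_norm_h g] with x hu hh
  rw [hu, signedRpow_mul_of_norm_eq_one hh]

theorem rep_ae_eq_signedRpow_sub {s t α : ℝ} (hs : 1 ≤ s) (ht : 1 ≤ t) (g : G)
    {u₁ u₂ : LpSp μ s} {v : LpSp μ t}
    (hv : ⇑v =ᵐ[μ] fun x => signedRpow α (u₁ x) - signedRpow α (u₂ x)) :
    ⇑((F.rep t ht).ρ g v) =ᵐ[μ] fun x =>
      signedRpow α ((F.rep s hs).ρ g u₁ x) - signedRpow α ((F.rep s hs).ρ g u₂ x) := by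
  filter_upwards [F.coeFn_rep ht g v, F.comp_φ_ae_eq g hv, F.signedRpow_rep_ae_eq α hs g u₁,
    F.signedRpow_rep_ae_eq α hs g u₂] with x hv hvφ h₁ h₂
  rw [hv, hvφ, h₁, h₂, mul_sub]

theorem exists_potential_of_h1Trivial [IsFiniteMeasure μ] {p q : ℝ} (hp : 1 ≤ p) (hpq : p ≤ q)
    (h1 : H1Trivial (F.rep p hp)) {b : G → LpSp μ q}
    (hb : IsCocycle (F.rep q (hp.trans hpq)) b) :
    ∃ f : LpSp μ p, ∀ g, ⇑(b g) =ᵐ[μ] ⇑f - ⇑((F.rep p hp).ρ g f) := by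
  have : Fact (1 ≤ ENNReal.ofReal p) := ⟨ENNReal.one_le_ofReal.2 hp⟩
  have : Fact (1 ≤ ENNReal.ofReal q) := ⟨ENNReal.one_le_ofReal.2 (hp.trans hpq)⟩
  set bp : G → LpSp μ p := fun g =>
    ((Lp.memLp (b g)).mono_exponent (ENNReal.ofReal_le_ofReal hpq)).toLp (b g)
  have hbp : ∀ g, ⇑(bp g) =ᵐ[μ] ⇑(b g) := fun g => MemLp.coeFn_toLp _
  have hcont : NormContinuous bp := normContinuous_iff_continuous.2 <|
    (continuous_toLp_of_exponent_le hpq).comp (normContinuous_iff_continuous.1 hb.1)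
  have hcoc : ∀ g k, bp (g * k) = bp g + (F.rep p hp).ρ g (bp k) := fun g k => by
    apply Lp.ext
    filter_upwards [hbp (g * k), hbp g, Lp.coeFn_add (bp g) ((F.rep p hp).ρ g (bp k)),
      Lp.coeFn_add (b g) ((F.rep q _).ρ g (b k)), F.rep_ae_eq_rep hp (hp.trans hpq) g (hbp k)]
      with x hgk hg hadd hadd' hk
    rw [hgk, hb.2 g k, hadd, hadd', Pi.add_apply, Pi.add_apply, hg, hk]
  obtain ⟨f, hf⟩ := h1 bp ⟨hcont, hcoc⟩
  exact ⟨f, fun g => (hbp g).symm.trans (by rw [hf g]; exact Lp.coeFn_sub _ _)⟩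

theorem exists_isCocycle_signedRpow {p q r : ℝ} (hp : 1 ≤ p) (hq : 1 ≤ q) (hr : 1 ≤ r)
    (hqr : q ≤ r) (f : LpSp μ p) {b : G → LpSp μ q} (hb : NormContinuous b)
    (hf : ∀ g, ⇑(b g) =ᵐ[μ] ⇑f - ⇑((F.rep p hp).ρ g f)) :
    ∃ c : G → LpSp μ r, IsCocycle (F.rep r hr) c ∧ ∀ g, ⇑(c g) =ᵐ[μ] fun x =>
      signedRpow (q / r) (f x) - signedRpow (q / r) ((F.rep p hp).ρ g f x) := by
  have : Fact (1 ≤ ENNReal.ofReal q) := ⟨ENNReal.one_le_ofReal.2 hq⟩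
  have : Fact (1 ≤ ENNReal.ofReal r) := ⟨ENNReal.one_le_ofReal.2 hr⟩
  have hq0 : 0 < q := zero_lt_one.trans_le hq
  have hmem : ∀ g, MemLp (fun x => signedRpow (q / r) (f x) -
      signedRpow (q / r) ((F.rep p hp).ρ g f x)) (.ofReal r) μ := fun g =>
    memLp_signedRpow_sub hq0 hqr (Lp.aestronglyMeasurable _) (Lp.aestronglyMeasurable _)
      ((Lp.memLp (b g)).ae_eq (hf g))
  set c : G → LpSp μ r := fun g => (hmem g).toLp _
  have hc : ∀ g, ⇑(c g) =ᵐ[μ] _ := fun g => MemLp.coeFn_toLp (hmem g)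
  refine ⟨c, ⟨?_, fun g k => ?_⟩, hc⟩
  · refine normContinuous_iff_continuous.2 <| continuous_of_edist_le_mul_rpow (C := 2) (by simp)
      (div_pos hq0 (hq0.trans_le hqr)) (normContinuous_iff_continuous.1 hb) fun g g₀ => ?_
    have hbg : ⇑((F.rep p hp).ρ g₀ f) - ⇑((F.rep p hp).ρ g f) =ᵐ[μ] ⇑(b g) - ⇑(b g₀) := by
      filter_upwards [hf g, hf g₀] with x h h₀
      simp only [Pi.sub_apply] at h h₀ ⊢
      rw [h, h₀]
      ring
    rw [Lp.edist_def, Lp.edist_def, ← eLpNorm_congr_ae hbg]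
    refine le_of_eq_of_le (eLpNorm_congr_ae ?_) (eLpNorm_signedRpow_sub_le hq0 hqr _ _)
    filter_upwards [hc g, hc g₀] with x h h₀
    rw [Pi.sub_apply, h, h₀]
    ring
  · apply Lp.ext
    filter_upwards [hc (g * k), hc g, Lp.coeFn_add (c g) ((F.rep r hr).ρ g (c k)),
      F.rep_ae_eq_signedRpow_sub hp hr g (hc k)] with x hgk hg hadd hk
    rw [hgk, hadd, Pi.add_apply, hg, hk, (F.rep p hp).map_mul']
    ring

theorem norm_signedRpow_sub_comp_φ_ae_eq {p r α : ℝ} (hp : 1 ≤ p) (hr : 1 ≤ r) (f : LpSp μ p)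
    (V : LpSp μ r) (g : G)
    (hV : ⇑(V - (F.rep r hr).ρ g V) =ᵐ[μ]
      fun x => signedRpow α (f x) - signedRpow α ((F.rep p hp).ρ g f x)) :
    (fun x => ‖signedRpow α (f (F.φ g x)) - V (F.φ g x)‖) =ᵐ[μ]
      fun x => ‖signedRpow α (f x) - V x‖ := by
  filter_upwards [hV, Lp.coeFn_sub V ((F.rep r hr).ρ g V), F.coeFn_rep hr g V,
    F.signedRpow_rep_ae_eq α hp g f, F.ae_norm_h g] with x hV hsub hrepV hrepf hh
  rw [hsub, Pi.sub_apply, hrepV, hrepf] at hV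
  have hW : signedRpow α (f x) - V x =
      F.h g x * (signedRpow α (f (F.φ g x)) - V (F.φ g x)) := by
    linear_combination -hV
  rw [hW, norm_mul, hh, one_mul]

theorem isCoboundary_of_memLp {p q : ℝ} (hp : 1 ≤ p) (hq : 1 ≤ q) {b : G → LpSp μ q}
    (f : LpSp μ p) (hfq : MemLp f (.ofReal q) μ)
    (hf : ∀ g, ⇑(b g) =ᵐ[μ] ⇑f - ⇑((F.rep p hp).ρ g f)) : IsCoboundary (F.rep q hq) b :=
  ⟨hfq.toLp f, fun g => Lp.ext <| by
    filter_upwards [hf g, Lp.coeFn_sub (hfq.toLp f) ((F.rep q hq).ρ g (hfq.toLp f)),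
      hfq.coeFn_toLp, F.rep_ae_eq_rep hp hq g hfq.coeFn_toLp.symm] with x h hsub hfx hrep
    rw [h, hsub, Pi.sub_apply, Pi.sub_apply, hfx, hrep]⟩

end BLmpFamily

theorem h1Trivial_intermediate_general (G : Type*) [Group G] [TopologicalSpace G]
    {X : Type*} [MeasurableSpace X] (μ : Measure X)
    [IsFiniteMeasure μ]
    (p q r : ℝ) (hp : 1 ≤ p) (hpq : p < q) (hqr : q < r)
    (F : BLmpFamily G μ) (herg : ErgodicFamily μ F.φ)
    (h1 : H1Trivial (F.rep p hp))
    (h2 : H1Trivial (F.rep r ((hp.trans hpq.le).trans hqr.le))) :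
    H1Trivial (F.rep q (hp.trans hpq.le)) := by
  intro b hb
  have hq : 1 ≤ q := hp.trans hpq.le
  have hr : 1 ≤ r := hq.trans hqr.le
  obtain ⟨f, hf⟩ := F.exists_potential_of_h1Trivial hp hpq.le h1 hb
  obtain ⟨c, hc, hcf⟩ := F.exists_isCocycle_signedRpow hp hq hr hqr.le f hb.1 hf
  obtain ⟨V, hV⟩ := h2 c hc
  set W : X → ℂ := fun x => signedRpow (q / r) (f x) - V x
  have hWm : AEStronglyMeasurable W μ :=
    (measurable_signedRpow.comp_aemeasurable (Lp.aestronglyMeasurable f).aemeasurable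
      ).aestronglyMeasurable.sub (Lp.aestronglyMeasurable V)
  obtain ⟨C, hC⟩ := herg.exists_ae_le (fun g => (F.measurePreserving_φ g).quasiMeasurePreserving)
    hWm.norm.aemeasurable fun g => F.norm_signedRpow_sub_comp_φ_ae_eq hp hr f V g <| by
      rw [← hV g]; exact hcf g
  have hψ : MemLp (fun x => signedRpow (q / r) (f x)) (.ofReal r) μ := by
    convert (MemLp.of_bound hWm C hC).add (Lp.memLp V) using 1
    ext x
    simp [W]
  exact F.isCoboundary_of_memLp hp hq f (memLp_of_memLp_signedRpow (by linarith) (by linarith)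
    (Lp.aestronglyMeasurable f) hψ) hf

/-- Proposition `prp-mpinterval`. Let `1 ≤ p < q < r < ∞`, `μ` a finite
measure, and `π^p` a (BL) measure-preserving ergodic representation with Mazur conjugates
`π^q`, `π^r`. If `H¹(G,π^p) = 0` and `H¹(G,π^r) = 0`, then `H¹(G,π^q) = 0`. -/
theorem h1Trivial_intermediate (G : Type*) [Group G] [TopologicalSpace G]
    [IsTopologicalGroup G]
    {X : Type*} [MeasurableSpace X] [StandardBorelSpace X] (μ : Measure X)
    [IsFiniteMeasure μ]
    (p q r : ℝ) (hp : 1 ≤ p) (hpq : p < q) (hqr : q < r)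
    (F : BLmpFamily G μ) (herg : ErgodicFamily μ F.φ)
    (h1 : H1Trivial (F.rep p hp))
    (h2 : H1Trivial (F.rep r ((hp.trans hpq.le).trans hqr.le))) :
    H1Trivial (F.rep q (hp.trans hpq.le)) :=
  h1Trivial_intermediate_general G μ p q r hp hpq hqr F herg h1 h2

end
end
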